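/- Let f_W be an n-layer ReLU network with weight matrices W_1, …, W_n, each nonzero, and let U_1, …, U_n be matrices of the same respective dimensions satisfying ‖U_l‖₂ ≤ (1/n)·‖W_l‖₂ for every l. Let B > 0, ε > 0, and let x be an input with ‖x‖₂ ≤ B. Then for all output indices i, j, | RM_ε(f_{W+U}, x, i, j) − RM_ε(f_W, x, i, j) | ≤ 2e · (B + ε) · (∏_{l=1}^{n} ‖W_l‖₂) · Σ_{l=1}^{n} ‖U_l‖₂ / ‖W_l‖₂. -/

import Mathlib

/-!
Since ReLU is 1-Lipschitz, peeling off the last layer gives, for the output gap `D` of the two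
networks, `D_l ≤ ‖W_l‖ D_{l-1} + ‖U_l‖ ∏_{k<l} ‖W_k + U_k‖ ‖x‖`, which telescopes to
`D_n ≤ (∏ (‖W_l‖ + ‖U_l‖) - ∏ ‖W_l‖) ‖x‖`. Writing `‖W_l‖ + ‖U_l‖ = ‖W_l‖ (1 + r_l)` with
`r_l = ‖U_l‖ / ‖W_l‖ ≤ 1/n`, this is at most `∏ ‖W_l‖ (exp (∑ r_l) - 1) ≤ e ∏ ‖W_l‖ ∑ r_l`.
A margin `f_i - f_j` moves by at most twice the output gap, and so does its supremum over the
`ε`-ball around `x`, whose points have norm at most `B + ε`.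
-/

open Matrix

/-- The spectral norm of a real matrix: its operator norm as a map between
Euclidean (`ℓ²`) spaces. -/
noncomputable def specNorm {m k : ℕ} (A : Matrix (Fin m) (Fin k) ℝ) : ℝ :=
  ‖LinearMap.toContinuousLinearMap (Matrix.toEuclideanLin A)‖

/-- The Euclidean (`ℓ²`) norm of a vector in `ℝ^k`. -/
noncomputable def vnorm {k : ℕ} (v : Fin k → ℝ) : ℝ :=
  Real.sqrt (∑ i, (v i) ^ 2)

/-- Coordinatewise ReLU activation. -/
def relu {k : ℕ} (v : Fin k → ℝ) : Fin k → ℝ := fun i => max (v i) 0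

/-- `actStack n d W x = act(W_n · act(W_{n-1} · ⋯ · act(W_1 · x)))`:
the activated output after `n` layers (activation applied after every layer). -/
def actStack : (n : ℕ) → (d : Fin (n + 1) → ℕ) →
    ((l : Fin n) → Matrix (Fin (d l.succ)) (Fin (d l.castSucc)) ℝ) →
    (Fin (d 0) → ℝ) → (Fin (d (Fin.last n)) → ℝ)
  | 0, _, _, x => x
  | n + 1, d, W, x =>
      relu ((W (Fin.last n)) *ᵥ
        actStack n (fun l => d l.castSucc) (fun l => W l.castSucc) x)

/-- The `n`-layer ReLU network with weight matrices `W_1, …, W_n`: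
`f_W(x) = W_n · act(W_{n-1} · ⋯ · act(W_1 · x) ⋯)` (no activation on the last
layer). For `n = 0` it is the identity. -/
def reluNet : (n : ℕ) → (d : Fin (n + 1) → ℕ) →
    ((l : Fin n) → Matrix (Fin (d l.succ)) (Fin (d l.castSucc)) ℝ) →
    (Fin (d 0) → ℝ) → (Fin (d (Fin.last n)) → ℝ)
  | 0, _, _, x => x
  | n + 1, d, W, x =>
      (W (Fin.last n)) *ᵥ
        actStack n (fun l => d l.castSucc) (fun l => W l.castSucc) x

/-- The robust margin operator with radius `ε` of a function
`f : ℝ^din → ℝ^dout` at `x` for an index pair `(i, j)`: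
`RM_ε(f, x, i, j) = max_{‖x' - x‖₂ ≤ ε} (f(x')_i - f(x')_j)`,
expressed as the supremum over the closed Euclidean ball. -/
noncomputable def robustMargin {din dout : ℕ} (ε : ℝ)
    (f : (Fin din → ℝ) → (Fin dout → ℝ)) (x : Fin din → ℝ) (i j : Fin dout) : ℝ :=
  sSup ((fun x' => f x' i - f x' j) '' {x' | vnorm (x' - x) ≤ ε})

open Finset

lemma vnorm_eq_norm_toLp {k : ℕ} (v : Fin k → ℝ) : vnorm v = ‖WithLp.toLp 2 v‖ := by
  simp [vnorm, EuclideanSpace.norm_eq, sq_abs]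

lemma vnorm_add_le {k : ℕ} (u v : Fin k → ℝ) : vnorm (u + v) ≤ vnorm u + vnorm v := by
  simpa only [vnorm_eq_norm_toLp, WithLp.toLp_add] using norm_add_le _ _

lemma vnorm_nonneg {k : ℕ} (v : Fin k → ℝ) : 0 ≤ vnorm v := Real.sqrt_nonneg _

lemma vnorm_le_of_abs_le {k : ℕ} {u v : Fin k → ℝ} (h : ∀ i, |u i| ≤ |v i|) :
    vnorm u ≤ vnorm v :=
  Real.sqrt_le_sqrt <| sum_le_sum fun i _ => sq_le_sq.2 (h i)

lemma abs_apply_le_vnorm {k : ℕ} (v : Fin k → ℝ) (i : Fin k) : |v i| ≤ vnorm v := by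
  rw [← Real.sqrt_sq_eq_abs]
  exact Real.sqrt_le_sqrt <| single_le_sum (fun j _ => sq_nonneg (v j)) (mem_univ i)

lemma abs_sub_sub_sub_le_two_mul_vnorm {k : ℕ} (u v : Fin k → ℝ) (i j : Fin k) :
    |(u i - u j) - (v i - v j)| ≤ 2 * vnorm (u - v) := by
  have hi := abs_apply_le_vnorm (u - v) i
  have hj := abs_apply_le_vnorm (u - v) j
  simp only [Pi.sub_apply] at hi hj
  calc |(u i - u j) - (v i - v j)| = |(u i - v i) - (u j - v j)| := by ring_nf
    _ ≤ |u i - v i| + |u j - v j| := abs_sub _ _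
    _ ≤ 2 * vnorm (u - v) := by linarith

lemma vnorm_relu_sub_relu_le {k : ℕ} (u v : Fin k → ℝ) :
    vnorm (relu u - relu v) ≤ vnorm (u - v) :=
  vnorm_le_of_abs_le fun i => abs_max_sub_max_le_abs (u i) (v i) 0

lemma vnorm_relu_le {k : ℕ} (v : Fin k → ℝ) : vnorm (relu v) ≤ vnorm v := by
  simpa [show relu (0 : Fin k → ℝ) = 0 from funext fun _ => max_self 0] using
    vnorm_relu_sub_relu_le v 0

lemma specNorm_nonneg {m k : ℕ} (A : Matrix (Fin m) (Fin k) ℝ) : 0 ≤ specNorm A :=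
  norm_nonneg _

lemma specNorm_add_le {m k : ℕ} (A E : Matrix (Fin m) (Fin k) ℝ) :
    specNorm (A + E) ≤ specNorm A + specNorm E := by
  simpa only [specNorm, map_add] using norm_add_le _ _

lemma vnorm_mulVec_le {m k : ℕ} (A : Matrix (Fin m) (Fin k) ℝ) (v : Fin k → ℝ) :
    vnorm (A *ᵥ v) ≤ specNorm A * vnorm v := by
  simpa [vnorm_eq_norm_toLp, specNorm, Matrix.toLpLin_toLp] using
    (LinearMap.toContinuousLinearMap (Matrix.toEuclideanLin A)).le_opNorm (WithLp.toLp 2 v)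

lemma vnorm_add_mulVec_sub_mulVec_le {m k : ℕ} (A E : Matrix (Fin m) (Fin k) ℝ)
    {y y' : Fin k → ℝ} {P P' X : ℝ} (hdiff : vnorm (y' - y) ≤ (P' - P) * X)
    (hy' : vnorm y' ≤ P' * X) :
    vnorm ((A + E) *ᵥ y' - A *ᵥ y) ≤ (P' * (specNorm A + specNorm E) - P * specNorm A) * X := by
  have hsplit : (A + E) *ᵥ y' - A *ᵥ y = A *ᵥ (y' - y) + E *ᵥ y' := by
    rw [Matrix.add_mulVec, Matrix.mulVec_sub]; abel
  calc vnorm ((A + E) *ᵥ y' - A *ᵥ y)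
      ≤ specNorm A * vnorm (y' - y) + specNorm E * vnorm y' := by
        rw [hsplit]
        exact (vnorm_add_le _ _).trans (add_le_add (vnorm_mulVec_le _ _) (vnorm_mulVec_le _ _))
    _ ≤ specNorm A * ((P' - P) * X) + specNorm E * (P' * X) :=
        add_le_add (mul_le_mul_of_nonneg_left hdiff (specNorm_nonneg A))
          (mul_le_mul_of_nonneg_left hy' (specNorm_nonneg E))
    _ = (P' * (specNorm A + specNorm E) - P * specNorm A) * X := by ring

lemma vnorm_actStack_le {n : ℕ} {d : Fin (n + 1) → ℕ}
    {W : (l : Fin n) → Matrix (Fin (d l.succ)) (Fin (d l.castSucc)) ℝ} {c : Fin n → ℝ}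
    (hc : ∀ l, specNorm (W l) ≤ c l) (x : Fin (d 0) → ℝ) :
    vnorm (actStack n d W x) ≤ (∏ l, c l) * vnorm x := by
  induction n with
  | zero => simp [actStack]
  | succ n ih =>
    have hlast := (specNorm_nonneg _).trans (hc (Fin.last n))
    set y := actStack n (fun l => d l.castSucc) (fun l => W l.castSucc) x
    have hy : vnorm y ≤ (∏ l : Fin n, c l.castSucc) * vnorm x :=
      ih (d := fun l => d l.castSucc) (W := fun l => W l.castSucc) (fun l => hc l.castSucc) x
    rw [actStack, Fin.prod_univ_castSucc]
    calc _ ≤ specNorm (W (Fin.last n)) * vnorm y :=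
          (vnorm_relu_le _).trans (vnorm_mulVec_le _ _)
      _ ≤ c (Fin.last n) * ((∏ l : Fin n, c l.castSucc) * vnorm x) :=
          mul_le_mul (hc _) hy (vnorm_nonneg _) hlast
      _ = _ := by ring

lemma vnorm_actStack_add_sub_actStack_le {n : ℕ} {d : Fin (n + 1) → ℕ}
    (W U : (l : Fin n) → Matrix (Fin (d l.succ)) (Fin (d l.castSucc)) ℝ) (x : Fin (d 0) → ℝ) :
    vnorm (actStack n d (fun l => W l + U l) x - actStack n d W x) ≤
      (∏ l, (specNorm (W l) + specNorm (U l)) - ∏ l, specNorm (W l)) * vnorm x := by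
  induction n with
  | zero => simp [actStack, vnorm]
  | succ n ih =>
    rw [actStack, actStack, Fin.prod_univ_castSucc, Fin.prod_univ_castSucc]
    exact (vnorm_relu_sub_relu_le _ _).trans <| vnorm_add_mulVec_sub_mulVec_le _ _
      (ih (d := fun l => d l.castSucc) (fun l => W l.castSucc) (fun l => U l.castSucc) x)
      (vnorm_actStack_le (d := fun l => d l.castSucc) (fun l => specNorm_add_le _ _) x)

lemma vnorm_reluNet_add_sub_reluNet_le {n : ℕ} {d : Fin (n + 1) → ℕ}
    (W U : (l : Fin n) → Matrix (Fin (d l.succ)) (Fin (d l.castSucc)) ℝ) (x : Fin (d 0) → ℝ) :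
    vnorm (reluNet n d (fun l => W l + U l) x - reluNet n d W x) ≤
      (∏ l, (specNorm (W l) + specNorm (U l)) - ∏ l, specNorm (W l)) * vnorm x := by
  cases n with
  | zero => simp [reluNet, vnorm]
  | succ n =>
    rw [reluNet, reluNet, Fin.prod_univ_castSucc, Fin.prod_univ_castSucc]
    exact vnorm_add_mulVec_sub_mulVec_le _ _
      (vnorm_actStack_add_sub_actStack_le (d := fun l => d l.castSucc)
        (fun l => W l.castSucc) (fun l => U l.castSucc) x)
      (vnorm_actStack_le (d := fun l => d l.castSucc) (fun l => specNorm_add_le _ _) x)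

lemma prod_one_add_sub_one_le {ι : Type*} (s : Finset ι) {r : ι → ℝ} (hr : ∀ i ∈ s, 0 ≤ r i)
    (hsum : ∑ i ∈ s, r i ≤ 1) : ∏ i ∈ s, (1 + r i) - 1 ≤ Real.exp 1 * ∑ i ∈ s, r i := by
  have hσ : 0 ≤ ∑ i ∈ s, r i := sum_nonneg hr
  have hprod : ∏ i ∈ s, (1 + r i) ≤ Real.exp (∑ i ∈ s, r i) := by
    rw [Real.exp_sum]
    exact prod_le_prod (fun i hi => by linarith [hr i hi])
      fun i _ => by linarith [Real.add_one_le_exp (r i)]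
  have hexp : |Real.exp (∑ i ∈ s, r i) - 1| ≤ 2 * |∑ i ∈ s, r i| :=
    Real.abs_exp_sub_one_le (by rwa [abs_of_nonneg hσ])
  rw [abs_of_nonneg hσ] at hexp
  have htwo : (2 : ℝ) ≤ Real.exp 1 := by linarith [Real.add_one_le_exp 1]
  calc ∏ i ∈ s, (1 + r i) - 1 ≤ Real.exp (∑ i ∈ s, r i) - 1 := by linarith
    _ ≤ 2 * ∑ i ∈ s, r i := (le_abs_self _).trans hexp
    _ ≤ Real.exp 1 * ∑ i ∈ s, r i := mul_le_mul_of_nonneg_right htwo hσ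

lemma prod_add_sub_prod_le {ι : Type*} (s : Finset ι) {a b : ι → ℝ} (ha : ∀ i ∈ s, 0 ≤ a i)
    (hb : ∀ i ∈ s, 0 ≤ b i) (hba : ∀ i ∈ s, b i ≤ 1 / #s * a i) :
    ∏ i ∈ s, (a i + b i) - ∏ i ∈ s, a i ≤ Real.exp 1 * (∏ i ∈ s, a i) * ∑ i ∈ s, b i / a i := by
  -- If `a i = 0` then `hba` forces `b i = 0`, so the junk value `b i / 0 = 0` is harmless.
  have hfactor : ∀ i ∈ s, a i + b i = a i * (1 + b i / a i) := by
    intro i hi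
    rcases (ha i hi).eq_or_lt with hai | hai
    · have : b i = 0 := le_antisymm (by simpa [← hai] using hba i hi) (hb i hi)
      simp [← hai, this]
    · field_simp
  have hratio : ∀ i ∈ s, b i / a i ≤ 1 / #s := fun i hi =>
    div_le_of_le_mul₀ (ha i hi) (by positivity) (hba i hi)
  have hsum : ∑ i ∈ s, b i / a i ≤ 1 :=
    calc ∑ i ∈ s, b i / a i ≤ #s • (1 / (#s : ℝ)) := sum_le_card_nsmul _ _ _ hratio
      _ ≤ 1 := by rw [nsmul_eq_mul, mul_one_div]; exact div_self_le_one _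
  rw [prod_congr rfl hfactor, prod_mul_distrib, mul_assoc, ← mul_sub_one, mul_left_comm]
  exact mul_le_mul_of_nonneg_left
    (prod_one_add_sub_one_le s (fun i hi => div_nonneg (hb i hi) (ha i hi)) hsum)
    (prod_nonneg ha)

lemma bddAbove_image_of_le_add {α : Type*} {s : Set α} {f g : α → ℝ} {c : ℝ}
    (hg : BddAbove (g '' s)) (hfg : ∀ y ∈ s, f y ≤ g y + c) : BddAbove (f '' s) := by
  obtain ⟨M, hM⟩ := hg
  exact ⟨M + c, Set.forall_mem_image.2 fun y hy =>
    (hfg y hy).trans (add_le_add_left (hM (Set.mem_image_of_mem g hy)) c)⟩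

lemma sSup_image_le_sSup_image_add {α : Type*} {s : Set α} (hs : s.Nonempty) {f g : α → ℝ}
    {c : ℝ} (hg : BddAbove (g '' s)) (hfg : ∀ y ∈ s, f y ≤ g y + c) :
    sSup (f '' s) ≤ sSup (g '' s) + c :=
  csSup_le (hs.image f) <| Set.forall_mem_image.2 fun y hy =>
    (hfg y hy).trans (add_le_add_left (le_csSup hg (Set.mem_image_of_mem g hy)) c)

-- Without boundedness both suprema are the junk value `0`.
lemma abs_sSup_image_sub_sSup_image_le {α : Type*} {s : Set α} (hs : s.Nonempty) {f g : α → ℝ}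
    {c : ℝ} (hfg : ∀ y ∈ s, |f y - g y| ≤ c) : |sSup (f '' s) - sSup (g '' s)| ≤ c := by
  have hf_le : ∀ y ∈ s, f y ≤ g y + c := fun y hy => by linarith [(abs_le.1 (hfg y hy)).2]
  have hg_le : ∀ y ∈ s, g y ≤ f y + c := fun y hy => by linarith [(abs_le.1 (hfg y hy)).1]
  by_cases hg : BddAbove (g '' s)
  · have hf := bddAbove_image_of_le_add hg hf_le
    rw [abs_sub_le_iff]
    constructor
    · linarith [sSup_image_le_sSup_image_add hs hg hf_le]
    · linarith [sSup_image_le_sSup_image_add hs hf hg_le]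
  · have hf : ¬BddAbove (f '' s) := fun hf => hg (bddAbove_image_of_le_add hf hg_le)
    obtain ⟨y, hy⟩ := hs
    rw [Real.sSup_of_not_bddAbove hf, Real.sSup_of_not_bddAbove hg, sub_self, abs_zero]
    exact (abs_nonneg _).trans (hfg y hy)

lemma abs_robustMargin_sub_robustMargin_le {din dout : ℕ} {ε c : ℝ} (hε : 0 ≤ ε)
    {f g : (Fin din → ℝ) → Fin dout → ℝ} {x : Fin din → ℝ} (i j : Fin dout)
    (hfg : ∀ y, vnorm (y - x) ≤ ε → vnorm (f y - g y) ≤ c) :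
    |robustMargin ε f x i j - robustMargin ε g x i j| ≤ 2 * c :=
  abs_sSup_image_sub_sSup_image_le ⟨x, by simpa [vnorm] using hε⟩ fun y hy =>
    (abs_sub_sub_sub_le_two_mul_vnorm _ _ i j).trans (by linarith [hfg y hy])

theorem robustMargin_reluNet_perturb_le_general {n : ℕ} (d : Fin (n + 1) → ℕ)
    (W U : (l : Fin n) → Matrix (Fin (d l.succ)) (Fin (d l.castSucc)) ℝ)
    (hU : ∀ l, specNorm (U l) ≤ (1 / (n : ℝ)) * specNorm (W l))
    (B ε : ℝ) (hε : 0 < ε)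
    (x : Fin (d 0) → ℝ) (hx : vnorm x ≤ B)
    (i j : Fin (d (Fin.last n))) :
    |robustMargin ε (reluNet n d (fun l => W l + U l)) x i j -
        robustMargin ε (reluNet n d W) x i j| ≤
      2 * Real.exp 1 * (B + ε) * (∏ l, specNorm (W l)) *
        ∑ l, specNorm (U l) / specNorm (W l) := by
  set P' := ∏ l, (specNorm (W l) + specNorm (U l))
  set P := ∏ l, specNorm (W l)
  have hPP' : P ≤ P' := prod_le_prod (fun l _ => specNorm_nonneg _)
    fun l _ => le_add_of_nonneg_right (specNorm_nonneg _)
  have hball : ∀ y, vnorm (y - x) ≤ ε → vnorm y ≤ B + ε := fun y hy => by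
    have := vnorm_add_le (y - x) x
    rw [sub_add_cancel] at this
    linarith
  have hgap : P' - P ≤ Real.exp 1 * P * ∑ l, specNorm (U l) / specNorm (W l) :=
    prod_add_sub_prod_le univ (fun l _ => specNorm_nonneg _) (fun l _ => specNorm_nonneg _)
      (by simpa using hU)
  have hBε : 0 ≤ B + ε := by linarith [vnorm_nonneg x]
  calc _ ≤ 2 * ((P' - P) * (B + ε)) :=
        abs_robustMargin_sub_robustMargin_le hε.le i j fun y hy =>
          (vnorm_reluNet_add_sub_reluNet_le W U y).trans
            (mul_le_mul_of_nonneg_left (hball y hy) (sub_nonneg.2 hPP'))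
    _ ≤ 2 * (Real.exp 1 * P * (∑ l, specNorm (U l) / specNorm (W l)) * (B + ε)) := by gcongr
    _ = _ := by ring

/-- robust-margin perturbation bound, Lemma A.2 part 2: if every
`W_l ≠ 0`, `‖U_l‖₂ ≤ (1/n)‖W_l‖₂`, `B > 0`, `ε > 0` and `‖x‖₂ ≤ B`, then for
all output indices `i, j`,
`|RM_ε(f_{W+U}, x, i, j) - RM_ε(f_W, x, i, j)|
  ≤ 2e·(B+ε)·(∏_l ‖W_l‖₂)·∑_l ‖U_l‖₂/‖W_l‖₂`. -/
theorem robustMargin_reluNet_perturb_le {n : ℕ} (hn : 1 ≤ n) (d : Fin (n + 1) → ℕ)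
    (W U : (l : Fin n) → Matrix (Fin (d l.succ)) (Fin (d l.castSucc)) ℝ)
    (hW : ∀ l, W l ≠ 0)
    (hU : ∀ l, specNorm (U l) ≤ (1 / (n : ℝ)) * specNorm (W l))
    (B ε : ℝ) (hB : 0 < B) (hε : 0 < ε)
    (x : Fin (d 0) → ℝ) (hx : vnorm x ≤ B)
    (i j : Fin (d (Fin.last n))) :
    |robustMargin ε (reluNet n d (fun l => W l + U l)) x i j -
        robustMargin ε (reluNet n d W) x i j| ≤
      2 * Real.exp 1 * (B + ε) * (∏ l, specNorm (W l)) *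
        ∑ l, specNorm (U l) / specNorm (W l) :=
  robustMargin_reluNet_perturb_le_general d W U hU B ε hε x hx i j
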